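/- Let X ⊆ ℤ² and let P ⊆ ℝ² be a box (product of two compact intervals). Then the set of extreme points of closure(conv X) ∩ P is finite; indeed every extreme point of closure(conv X) ∩ P is an extreme point of closure(conv X) lying in P, or an extreme point (corner) of P, or lies on an edge of P intersected with the boundary of closure(conv X), and there are finitely many points of each type. -/

import Mathlib

/-!
Write `C = closure (conv X)`. An extreme point of `C ∩ P` either lies in the interior of the box
`P`, and is then an extreme point of `C`, or lies on one of the four lines carrying the edges of
`P`; a line contains at most two extreme points of any set. Extreme points of `C` lie in
`closure X ⊆ ℤ²`: if a ball `B(p, ρ)` misses `X`, every point of `conv X ∩ B(p, ρ)` is a convex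
combination of the points where the segments towards `X` leave the ball, so `p` lies in the
convex hull of `C ∩ ∂B(p, ρ)`, which is compact (Carathéodory), and cannot be extreme.
-/

open Set Module Filter Topology

section FiniteDimensional

variable {E : Type*} [AddCommGroup E] [Module ℝ E] [FiniteDimensional ℝ E]

theorem convexHull_eq_image_stdSimplex_pi (S : Set E) :
    convexHull ℝ S = (fun wz : (Fin (finrank ℝ E + 1) → ℝ) × (Fin (finrank ℝ E + 1) → E) =>
      ∑ i, wz.1 i • wz.2 i) '' (stdSimplex ℝ _ ×ˢ univ.pi fun _ => S) := by
  refine Subset.antisymm (fun x hx => ?_) ?_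
  · obtain ⟨ι, _, z, w, hzS, hz, hw0, hw1, rfl⟩ := eq_pos_convex_span_of_mem_convexHull hx
    -- Carathéodory: at most `finrank ℝ E + 1` points are needed; pad with zero weights.
    obtain ⟨e⟩ : Nonempty (ι ↪ Fin (finrank ℝ E + 1)) :=
      Function.Embedding.nonempty_of_card_le <| by
        simpa using hz.card_le_finrank_succ.trans (Nat.succ_le_succ (Submodule.finrank_le _))
    obtain ⟨i₀⟩ : Nonempty ι := by
      by_contra h
      simp [not_nonempty_iff.1 h] at hw1
    classical
    refine ⟨(Function.extend e w 0, Function.extend e z fun _ => z i₀),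
      ⟨⟨fun j => ?_, ?_⟩, fun j _ => ?_⟩, ?_⟩
    · by_cases hj : j ∈ range e
      · obtain ⟨i, rfl⟩ := hj
        simpa [e.injective.extend_apply] using (hw0 i).le
      · simp [Function.extend_apply' _ _ _ hj]
    · rw [← hw1]
      exact (Fintype.sum_of_injective e e.injective w (Function.extend e w 0)
        (fun j hj => Function.extend_apply' _ _ _ hj)
        fun i => (e.injective.extend_apply _ _ _).symm).symm
    · by_cases hj : j ∈ range e
      · obtain ⟨i, rfl⟩ := hj
        simpa [e.injective.extend_apply] using hzS (mem_range_self i)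
      · simpa [Function.extend_apply' _ _ _ hj] using hzS (mem_range_self i₀)
    · refine (Fintype.sum_of_injective e e.injective _ _ (fun j hj => ?_) fun i => ?_).symm
      · simp [Function.extend_apply' _ _ _ hj]
      · simp [e.injective.extend_apply]
  · rintro _ ⟨⟨w, z⟩, ⟨⟨hw0, hw1⟩, hz⟩, rfl⟩
    exact (convex_convexHull ℝ S).sum_mem (fun i _ => hw0 i) hw1
      (fun i _ => subset_convexHull ℝ S (hz i (mem_univ i)))

theorem IsCompact.convexHull [TopologicalSpace E] [ContinuousAdd E] [ContinuousSMul ℝ E]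
    {S : Set E} (hS : IsCompact S) : IsCompact (convexHull ℝ S) := by
  rw [convexHull_eq_image_stdSimplex_pi]
  exact ((isCompact_stdSimplex ℝ _).prod (isCompact_univ_pi fun _ => hS)).image (by fun_prop)

end FiniteDimensional

section Normed

variable {E : Type*} [NormedAddCommGroup E] [NormedSpace ℝ E]

theorem exists_lineMap_mem_sphere {p q z : E} {ρ : ℝ} (hq : q ∈ Metric.ball p ρ)
    (hz : z ∉ Metric.ball p ρ) :
    ∃ θ ∈ Ioc (0 : ℝ) 1, AffineMap.lineMap q z θ ∈ Metric.sphere p ρ := by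
  rw [Metric.mem_ball] at hq
  rw [Metric.mem_ball, not_lt] at hz
  obtain ⟨θ, ⟨hθ0, hθ1⟩, hθ⟩ := intermediate_value_Icc zero_le_one
    (f := fun θ : ℝ => dist (AffineMap.lineMap q z θ) p) (Continuous.continuousOn (by fun_prop))
    ⟨by simpa using hq.le, by simpa using hz⟩
  refine ⟨θ, ⟨hθ0.lt_of_ne ?_, hθ1⟩, hθ⟩
  rintro rfl
  simp_all

theorem convexHull_inter_ball_subset_convexHull_inter_sphere {A X : Set E} {p : E} {ρ : ℝ}
    (hA : Convex ℝ A) (hXA : X ⊆ A) (hX : Disjoint (Metric.ball p ρ) X) :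
    Metric.ball p ρ ∩ convexHull ℝ X ⊆ convexHull ℝ (A ∩ Metric.sphere p ρ) := by
  rintro q ⟨hqρ, hq⟩
  have hqA : q ∈ A := convexHull_min hXA hA hq
  obtain ⟨ι, _, z, w, hzX, -, hw0, hw1, hwz⟩ := eq_pos_convex_span_of_mem_convexHull hq
  have hzρ i : z i ∉ Metric.ball p ρ := fun h => hX.ne_of_mem h (hzX (mem_range_self i)) rfl
  choose θ hθ hθρ using fun i => exists_lineMap_mem_sphere hqρ (hzρ i)
  set s := fun i => AffineMap.lineMap q (z i) (θ i)
  set μ := fun i => w i / θ i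
  -- `s i - q = θ i • (z i - q)`, so the weights `w i / θ i` recombine the `s i` into `q`.
  have hμs i : μ i • s i = μ i • q + w i • (z i - q) := by
    simp only [s, μ, AffineMap.lineMap_apply_module', smul_add, smul_smul,
      div_mul_cancel₀ _ (hθ i).1.ne']
    abel
  have hμ : 1 ≤ ∑ i, μ i := hw1 ▸ Finset.sum_le_sum fun i _ =>
    le_div_self (hw0 i).le (hθ i).1 (hθ i).2
  have hsum : ∑ i, μ i • s i = (∑ i, μ i) • q := by
    simp only [hμs, Finset.sum_add_distrib, ← Finset.sum_smul, smul_sub, Finset.sum_sub_distrib,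
      hw1, one_smul, hwz, sub_self, add_zero]
  have hcenter : Finset.univ.centerMass μ s = q := by
    rw [Finset.centerMass, hsum, smul_smul, inv_mul_cancel₀ (by linarith), one_smul]
  rw [← hcenter]
  exact Finset.centerMass_mem_convexHull _ (fun i _ => div_nonneg (hw0 i).le (hθ i).1.le)
    (by linarith) fun i _ =>
      ⟨hA.lineMap_mem hqA (hXA (hzX (mem_range_self i))) (Ioc_subset_Icc_self (hθ i)), hθρ i⟩

theorem extremePoints_closure_convexHull_subset_closure [FiniteDimensional ℝ E] (X : Set E) :
    (closure (convexHull ℝ X)).extremePoints ℝ ⊆ closure X := by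
  intro p hp
  by_contra hpX
  obtain ⟨ρ, hρ, hball⟩ := Metric.isOpen_iff.1 isClosed_closure.isOpen_compl p hpX
  set C := closure (convexHull ℝ X)
  have hC : Convex ℝ C := (convex_convexHull ℝ X).closure
  set S := C ∩ Metric.sphere p ρ
  have hS : IsCompact (convexHull ℝ S) :=
    ((isCompact_sphere p ρ).inter_left isClosed_closure).convexHull
  have hpS : p ∈ convexHull ℝ S := by
    have hdisj : Disjoint (Metric.ball p ρ) X :=
      disjoint_right.2 fun x hx hxρ => hball hxρ (subset_closure hx)
    refine closure_minimal (convexHull_inter_ball_subset_convexHull_inter_sphere hC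
      ((subset_convexHull ℝ X).trans subset_closure) hdisj) hS.isClosed ?_
    exact Metric.isOpen_ball.inter_closure ⟨Metric.mem_ball_self hρ, hp.1⟩
  have hpS' : p ∈ S := extremePoints_convexHull_subset <|
    inter_extremePoints_subset_extremePoints_of_subset (convexHull_min inter_subset_left hC)
      ⟨hpS, hp⟩
  simpa [hρ.ne] using hpS'.2

end Normed

theorem Convex.mem_extremePoints_of_mem_extremePoints_inter_of_mem_interior {E : Type*}
    [AddCommGroup E] [Module ℝ E] [TopologicalSpace E] [IsTopologicalAddGroup E]
    [ContinuousSMul ℝ E]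
    {A B : Set E} {p : E} (hA : Convex ℝ A) (hp : p ∈ (A ∩ B).extremePoints ℝ)
    (hpB : p ∈ interior B) : p ∈ A.extremePoints ℝ := by
  refine ⟨hp.1.1, fun x hx y hy hpxy => ?_⟩
  have hnear (z : E) : ∀ᶠ t in 𝓝 (0 : ℝ), AffineMap.lineMap p z t ∈ B :=
    AffineMap.lineMap_continuous.continuousAt.preimage_mem_nhds (by
      simpa using mem_interior_iff_mem_nhds.1 hpB)
  obtain ⟨t, ⟨hxB, hyB⟩, ht⟩ := ((((hnear x).and (hnear y)).filter_mono nhdsWithin_le_nhds).and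
    (Ioo_mem_nhdsGT one_pos)).exists
  have hmem (z : E) (hz : z ∈ A) : AffineMap.lineMap p z t ∈ A :=
    hA.lineMap_mem hp.1.1 hz ⟨ht.1.le, ht.2.le⟩
  have hseg : p ∈ openSegment ℝ (AffineMap.lineMap p x t) (AffineMap.lineMap p y t) := by
    simp only [← AffineMap.homothety_eq_lineMap, ← image_openSegment]
    exact ⟨p, hpxy, AffineMap.homothety_apply_same p t⟩
  have := hp.2 ⟨hmem x hx, hxB⟩ ⟨hmem y hy, hyB⟩ hseg
  rw [AffineMap.lineMap_eq_left_iff] at this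
  exact (this.resolve_right ht.1.ne').symm

theorem AffineMap.finite_preimage_extremePoints {𝕜 E : Type*} [Field 𝕜] [LinearOrder 𝕜]
    [IsStrictOrderedRing 𝕜] [AddCommGroup E] [Module 𝕜 E] {f : 𝕜 →ᵃ[𝕜] E}
    (hf : Function.Injective f) (K : Set E) : (f ⁻¹' K.extremePoints 𝕜).Finite := by
  set T := f ⁻¹' K.extremePoints 𝕜
  have hmid ⦃a b c : 𝕜⦄ (ha : a ∈ T) (hb : b ∈ T) (hc : c ∈ T) (hab : a < b) (hbc : b < c) :
      False := by
    refine hab.ne (hf (hb.2 ha.1 hc.1 ?_))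
    rw [← image_openSegment, openSegment_eq_Ioo (hab.trans hbc)]
    exact mem_image_of_mem f ⟨hab, hbc⟩
  rcases T.eq_empty_or_nonempty with hT | ⟨t, ht⟩
  · simp [hT]
  have hlt : (T ∩ Iio t).Subsingleton := fun a ha b hb => by
    rcases lt_trichotomy a b with h | h | h
    exacts [(hmid ha.1 hb.1 ht h hb.2).elim, h, (hmid hb.1 ha.1 ht h ha.2).elim]
  have hgt : (T ∩ Ioi t).Subsingleton := fun a ha b hb => by
    rcases lt_trichotomy a b with h | h | h
    exacts [(hmid ht ha.1 hb.1 ha.2 h).elim, h, (hmid ht hb.1 ha.1 hb.2 h).elim]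
  refine ((hlt.finite.union (finite_singleton t)).union hgt.finite).subset fun s hs => ?_
  rcases lt_trichotomy s t with h | rfl | h
  exacts [.inl (.inl ⟨hs, h⟩), .inl (.inr rfl), .inr ⟨hs, h⟩]

theorem finite_extremePoints_fst_eq (K : Set (ℝ × ℝ)) (c : ℝ) :
    {p ∈ K.extremePoints ℝ | p.1 = c}.Finite := by
  set f := AffineMap.lineMap (k := ℝ) ((c, 0) : ℝ × ℝ) (c, 1)
  refine ((f.finite_preimage_extremePoints (AffineMap.lineMap_injective ℝ (by simp)) K).image
    f).subset fun p ⟨hp, hpc⟩ => ?_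
  have hfp : f p.2 = p := by ext <;> simp [f, AffineMap.lineMap_apply_module', hpc]
  exact ⟨p.2, by rwa [mem_preimage, hfp], hfp⟩

theorem finite_extremePoints_snd_eq (K : Set (ℝ × ℝ)) (c : ℝ) :
    {p ∈ K.extremePoints ℝ | p.2 = c}.Finite := by
  set f := AffineMap.lineMap (k := ℝ) ((0, c) : ℝ × ℝ) (1, c)
  refine ((f.finite_preimage_extremePoints (AffineMap.lineMap_injective ℝ (by simp)) K).image
    f).subset fun p ⟨hp, hpc⟩ => ?_
  have hfp : f p.1 = p := by ext <;> simp [f, AffineMap.lineMap_apply_module', hpc]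
  exact ⟨p.1, by rwa [mem_preimage, hfp], hfp⟩

theorem Prod.eq_or_eq_of_mem_Icc_of_notMem_interior {α β : Type*}
    [TopologicalSpace α] [LinearOrder α] [OrderTopology α] [DenselyOrdered α] [NoMinOrder α]
    [NoMaxOrder α] [TopologicalSpace β] [LinearOrder β] [OrderTopology β] [DenselyOrdered β]
    [NoMinOrder β] [NoMaxOrder β] {l u p : α × β} (hp : p ∈ Icc l u)
    (hint : p ∉ interior (Icc l u)) : p.1 = l.1 ∨ p.1 = u.1 ∨ p.2 = l.2 ∨ p.2 = u.2 := by
  rw [Icc_prod_eq] at hp hint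
  rw [interior_prod_eq, interior_Icc, interior_Icc] at hint
  by_contra! h
  exact hint ⟨⟨hp.1.1.lt_of_ne' h.1, hp.1.2.lt_of_ne h.2.1⟩,
    ⟨hp.2.1.lt_of_ne' h.2.2.1, hp.2.2.lt_of_ne h.2.2.2⟩⟩

def integerLattice : Set (ℝ × ℝ) := {p | ∃ a b : ℤ, p = ((a : ℝ), (b : ℝ))}

theorem integerLattice_eq : integerLattice = range ((↑) : ℤ → ℝ) ×ˢ range ((↑) : ℤ → ℝ) := by
  ext ⟨x, y⟩
  simp [integerLattice, eq_comm]

theorem isClosed_integerLattice : IsClosed integerLattice := by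
  rw [integerLattice_eq]
  exact Int.isClosedEmbedding_coe_real.isClosed_range.prod
    Int.isClosedEmbedding_coe_real.isClosed_range

theorem finite_range_intCast_inter_Icc (a b : ℝ) : (range ((↑) : ℤ → ℝ) ∩ Icc a b).Finite :=
  ((finite_Icc ⌈a⌉ ⌊b⌋).image _).subset fun _ ⟨⟨n, hn⟩, ha, hb⟩ =>
    ⟨n, ⟨Int.ceil_le.2 (hn ▸ ha), Int.le_floor.2 (hn ▸ hb)⟩, hn⟩

theorem finite_integerLattice_inter_Icc (l u : ℝ × ℝ) : (integerLattice ∩ Icc l u).Finite := by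
  rw [integerLattice_eq, Icc_prod_eq, prod_inter_prod]
  exact (finite_range_intCast_inter_Icc _ _).prod (finite_range_intCast_inter_Icc _ _)

theorem extremePoints_inter_box_finite_dim2
    (X : Set (ℝ × ℝ))
    (hX : X ⊆ {p : ℝ × ℝ | ∃ a b : ℤ, p = ((a : ℝ), (b : ℝ))})
    (l u : ℝ × ℝ) :
    (Set.extremePoints ℝ (closure (convexHull ℝ X) ∩ Set.Icc l u)).Finite ∧
    ∀ p ∈ Set.extremePoints ℝ (closure (convexHull ℝ X) ∩ Set.Icc l u),
      (p ∈ Set.extremePoints ℝ (closure (convexHull ℝ X)) ∧ p ∈ Set.Icc l u) ∨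
      p ∈ Set.extremePoints ℝ (Set.Icc l u) ∨
      (p ∈ frontier (Set.Icc l u) ∧ p ∈ frontier (closure (convexHull ℝ X))) := by
  set C := closure (convexHull ℝ X)
  have hC : Convex ℝ C := (convex_convexHull ℝ X).closure
  refine ⟨?_, fun p hp => ?_⟩
  · have hlines (K : Set (ℝ × ℝ)) := ((finite_extremePoints_fst_eq K l.1).union
      (finite_extremePoints_fst_eq K u.1)).union
        ((finite_extremePoints_snd_eq K l.2).union (finite_extremePoints_snd_eq K u.2))
    refine ((finite_integerLattice_inter_Icc l u).union (hlines (C ∩ Icc l u))).subset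
      fun p hp => ?_
    by_cases hint : p ∈ interior (Icc l u)
    · have hpC := hC.mem_extremePoints_of_mem_extremePoints_inter_of_mem_interior hp hint
      exact .inl ⟨isClosed_integerLattice.closure_subset_iff.2 hX
        (extremePoints_closure_convexHull_subset_closure X hpC), hp.1.2⟩
    · rcases Prod.eq_or_eq_of_mem_Icc_of_notMem_interior hp.1.2 hint with h | h | h | h
      exacts [.inr (.inl (.inl ⟨hp, h⟩)), .inr (.inl (.inr ⟨hp, h⟩)),
        .inr (.inr (.inl ⟨hp, h⟩)), .inr (.inr (.inr ⟨hp, h⟩))]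
  · by_cases hPint : p ∈ interior (Icc l u)
    · exact .inl ⟨hC.mem_extremePoints_of_mem_extremePoints_inter_of_mem_interior hp hPint,
        hp.1.2⟩
    by_cases hCint : p ∈ interior C
    · rw [inter_comm] at hp
      exact .inr (.inl
        ((convex_Icc l u).mem_extremePoints_of_mem_extremePoints_inter_of_mem_interior hp hCint))
    · exact .inr (.inr ⟨⟨subset_closure hp.1.2, hPint⟩, ⟨subset_closure hp.1.1, hCint⟩⟩)
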